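/- arXiv:2605.08634 — 5 statements merged into one kernel-verified Lean document; each statement's English description precedes it below -/
import Mathlib

section
/- For each j with 1 ≤ j ≤ L there exists a constant C ≥ 0 such that for every k ∈ ℕ there exists φ̂ in the iterated space V^(k) = span{T^k v : v ∈ V^(0)} with ‖φ̂ − φ_j‖ ≤ C (λ_{L+1}/λ_j)^k. (Convergence of the localized standard subspace iteration to the dominant eigenfunctions.) -/
open scoped RealInnerProductSpace

/-! Pick `v ∈ V⁽⁰⁾` whose projection onto the dominant eigenspace is `φ j`, so that `u = v - φ j`
is orthogonal to `φ 0, …, φ (L-1)`. Then `λ_j⁻ᵏ Tᵏ v ∈ V⁽ᵏ⁾` differs from `φ j` by `λ_j⁻ᵏ Tᵏ u`,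
and since `Tᵏ` is self-adjoint with eigenvalues `λ_iᵏ`, Parseval's identity gives
`‖Tᵏ u‖ ≤ λ_Lᵏ ‖u‖`. -/

theorem HilbertBasis.hasSum_inner_sq {ι H : Type*} [NormedAddCommGroup H]
    [InnerProductSpace ℝ H] (b : HilbertBasis ι ℝ H) (x : H) :
    HasSum (fun i => ⟪x, b i⟫ ^ 2) (‖x‖ ^ 2) := by
  simpa only [real_inner_comm x, ← sq, real_inner_self_eq_norm_sq] using
    b.hasSum_inner_mul_inner x x

theorem ContinuousLinearMap.pow_apply_of_apply_eq_smul {R E : Type*} [CommSemiring R]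
    [AddCommMonoid E] [Module R E] [TopologicalSpace E] (T : E →L[R] E) {μ : R} {v : E}
    (hv : T v = μ • v) (n : ℕ) : (T ^ n) v = μ ^ n • v := by
  induction n with
  | zero => simp
  | succ n ih => rw [pow_succ', mul_apply_eq_comp, ih, map_smul, hv, smul_smul, pow_succ]

section Eigenbasis

variable {ι H : Type*} [NormedAddCommGroup H] [InnerProductSpace ℝ H]
  {T : H →ₗ[ℝ] H} {b : HilbertBasis ι ℝ H} {μ : ι → ℝ}

theorem LinearMap.IsSymmetric.inner_apply_basis (hT : T.IsSymmetric)
    (hb : ∀ i, T (b i) = μ i • b i) (x : H) (i : ι) : ⟪T x, b i⟫ = μ i * ⟪x, b i⟫ := by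
  rw [hT x (b i), hb i, real_inner_smul_right]

theorem LinearMap.IsSymmetric.norm_apply_le_of_inner_eq_zero (hT : T.IsSymmetric)
    (hb : ∀ i, T (b i) = μ i • b i) {s : Set ι} {c : ℝ} (hc : 0 ≤ c) (hμ : ∀ i ∉ s, |μ i| ≤ c)
    {x : H} (hx : ∀ i ∈ s, ⟪x, b i⟫ = 0) : ‖T x‖ ≤ c * ‖x‖ := by
  have hterm : ∀ i, ⟪T x, b i⟫ ^ 2 ≤ c ^ 2 * ⟪x, b i⟫ ^ 2 := by
    intro i
    rw [hT.inner_apply_basis hb, mul_pow]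
    by_cases hi : i ∈ s
    · simp [hx i hi]
    · have := abs_le.mp (hμ i hi)
      exact mul_le_mul_of_nonneg_right (sq_le_sq' this.1 this.2) (sq_nonneg _)
  have hsq : ‖T x‖ ^ 2 ≤ (c * ‖x‖) ^ 2 := by
    rw [mul_pow]
    exact hasSum_le hterm (b.hasSum_inner_sq (T x)) ((b.hasSum_inner_sq x).mul_left _)
  exact le_of_sq_le_sq hsq (by positivity)

end Eigenbasis

theorem inner_sub_eq_zero_of_sum_inner_smul_eq {ι H : Type*} [NormedAddCommGroup H]
    [InnerProductSpace ℝ H] {e : ι → H} (he : Orthonormal ℝ e) {s : Finset ι} {v w : H}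
    (hv : ∑ i ∈ s, ⟪v, e i⟫ • e i = w) {i : ι} (hi : i ∈ s) : ⟪v - w, e i⟫ = 0 := by
  rw [inner_sub_left, ← hv, he.inner_left_sum _ hi, conj_trivial, sub_self]

theorem stmt_2_general {H : Type*} [NormedAddCommGroup H] [InnerProductSpace ℝ H] [CompleteSpace H]
    (T : H →L[ℝ] H) (hTsa : IsSelfAdjoint T)
    (φ : HilbertBasis ℕ ℝ H) (lam : ℕ → ℝ)
    (heig : ∀ j, T (φ j) = lam j • φ j) (hpos : ∀ j, 0 < lam j) (hmono : Antitone lam)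
    (L : ℕ) (V0 : Submodule ℝ H)
    (hfull : ∀ w ∈ Submodule.span ℝ (Set.range fun i : Fin L => (φ i : H)),
      ∃ v ∈ V0, (∑ j ∈ Finset.range L, ⟪v, φ j⟫ • (φ j : H)) = w) :
    ∀ j < L, ∃ C : ℝ, 0 ≤ C ∧ ∀ k : ℕ,
      ∃ φhat ∈ Submodule.map (T ^ k).toLinearMap V0,
        ‖φhat - φ j‖ ≤ C * (lam L / lam j) ^ k := by
  intro j hj
  obtain ⟨v, hvV0, hv⟩ := hfull (φ j) (Submodule.subset_span ⟨⟨j, hj⟩, rfl⟩)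
  have hu : ∀ i ∈ Set.Iio L, ⟪v - φ j, φ i⟫ = 0 := fun i hi =>
    inner_sub_eq_zero_of_sum_inner_smul_eq φ.orthonormal hv (Finset.mem_range.mpr hi)
  refine ⟨‖v - φ j‖, norm_nonneg _, fun k => ?_⟩
  have hlamj : 0 < lam j ^ k := pow_pos (hpos j) k
  have hdecay : ‖(T ^ k) (v - φ j)‖ ≤ lam L ^ k * ‖v - φ j‖ :=
    (hTsa.pow k).isSymmetric.norm_apply_le_of_inner_eq_zero
      (fun i => T.pow_apply_of_apply_eq_smul (heig i) k) (pow_nonneg (hpos L).le k)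
      (fun i hi => by
        rw [abs_of_pos (pow_pos (hpos i) k)]
        exact pow_le_pow_left₀ (hpos i).le (hmono (not_lt.mp hi)) k)
      hu
  have hdiff : (T ^ k) ((lam j ^ k)⁻¹ • v) - φ j = (lam j ^ k)⁻¹ • (T ^ k) (v - φ j) := by
    rw [map_sub, T.pow_apply_of_apply_eq_smul (heig j), smul_sub, map_smul,
      inv_smul_smul₀ hlamj.ne']
  refine ⟨(T ^ k) ((lam j ^ k)⁻¹ • v), Submodule.mem_map_of_mem (V0.smul_mem _ hvV0), ?_⟩
  calc ‖(T ^ k) ((lam j ^ k)⁻¹ • v) - φ j‖ = (lam j ^ k)⁻¹ * ‖(T ^ k) (v - φ j)‖ := by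
        rw [hdiff, norm_smul, Real.norm_of_nonneg (inv_pos.mpr hlamj).le]
    _ ≤ (lam j ^ k)⁻¹ * (lam L ^ k * ‖v - φ j‖) := by gcongr
    _ = ‖v - φ j‖ * (lam L / lam j) ^ k := by rw [div_pow]; field_simp

/-- Convergence of the localized standard subspace iteration: for each dominant
index `j < L`, the iterated spaces `V⁽ᵏ⁾ = Tᵏ V⁽⁰⁾` contain approximations of the
eigenfunction `φ j` with error `C (λ_{L+1}/λ_j)ᵏ` (eigenvalues indexed from `0`). -/
theorem stmt_2 {H : Type*} [NormedAddCommGroup H] [InnerProductSpace ℝ H] [CompleteSpace H]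
    (T : H →L[ℝ] H) (hTsa : IsSelfAdjoint T) (hTc : IsCompactOperator ⇑T)
    (φ : HilbertBasis ℕ ℝ H) (lam : ℕ → ℝ)
    (heig : ∀ j, T (φ j) = lam j • φ j) (hpos : ∀ j, 0 < lam j) (hmono : Antitone lam)
    (L : ℕ) (V0 : Submodule ℝ H) (hV0dim : Module.finrank ℝ V0 = L)
    (hfull : ∀ w ∈ Submodule.span ℝ (Set.range fun i : Fin L => (φ i : H)),
      ∃ v ∈ V0, (∑ j ∈ Finset.range L, ⟪v, φ j⟫ • (φ j : H)) = w) :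
    ∀ j < L, ∃ C : ℝ, 0 ≤ C ∧ ∀ k : ℕ,
      ∃ φhat ∈ Submodule.map (T ^ k).toLinearMap V0,
        ‖φhat - φ j‖ ≤ C * (lam L / lam j) ^ k :=
  stmt_2_general T hTsa φ lam heig hpos hmono L V0 hfull
end

section
/- For every real number γ > 0 and every natural number n ≥ 1, the Chebyshev polynomial of the first kind satisfies T_n(1 + 2γ) > (1/2)(1 + 4γ)^n. -/
open Polynomial Polynomial.Chebyshev in
private lemma stmt_5_aux (γ : ℝ) (hγ : 0 < γ) (n : ℕ) (hn : 1 ≤ n) :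
    (1 / 2) * (1 + 4 * γ) ^ n < (T ℝ n).eval (1 + 2 * γ) ∧
    (1 + 4 * γ) * (T ℝ n).eval (1 + 2 * γ) ≤ (T ℝ (n + 1)).eval (1 + 2 * γ) := by
  induction n, hn using Nat.le_induction with
  | base =>
    push_cast
    rw [T_one, T_two]
    simp only [Polynomial.eval_sub, Polynomial.eval_mul, Polynomial.eval_pow,
      Polynomial.eval_ofNat, Polynomial.eval_one, Polynomial.eval_X]
    constructor <;> nlinarith
  | succ n hn ih =>
    obtain ⟨ih1, ih2⟩ := ih
    have hpos : 0 < (T ℝ n).eval (1 + 2 * γ) := by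
      have : 0 < (1 / 2) * (1 + 4 * γ) ^ n := by positivity
      linarith
    have hrec := Polynomial.Chebyshev.T_add_two ℝ (n : ℤ)
    have hr : (T ℝ ((n : ℤ) + 2)).eval (1 + 2 * γ) =
        2 * (1 + 2 * γ) * (T ℝ ((n : ℤ) + 1)).eval (1 + 2 * γ)
          - (T ℝ (n : ℤ)).eval (1 + 2 * γ) := by
      rw [hrec]; simp [Polynomial.eval_mul]
    push_cast
    rw [show ((n:ℤ) + 1 + 1) = (n:ℤ) + 2 from by ring]
    constructor
    · calc (1 / 2) * (1 + 4 * γ) ^ (n + 1)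
          = (1 + 4 * γ) * ((1 / 2) * (1 + 4 * γ) ^ n) := by ring
        _ < (1 + 4 * γ) * (T ℝ (n : ℤ)).eval (1 + 2 * γ) := by
            apply mul_lt_mul_of_pos_left ih1; linarith
        _ ≤ (T ℝ ((n : ℤ) + 1)).eval (1 + 2 * γ) := ih2
    · rw [hr]; nlinarith

/-- For `γ > 0` and `n ≥ 1`, the Chebyshev polynomial of the first kind satisfies
`T_n(1 + 2γ) > (1/2)(1 + 4γ)ⁿ`. -/
theorem stmt_5 (γ : ℝ) (hγ : 0 < γ) (n : ℕ) (hn : 1 ≤ n) :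
    (1 / 2) * (1 + 4 * γ) ^ n < (Polynomial.Chebyshev.T ℝ n).eval (1 + 2 * γ) := by
  exact (stmt_5_aux γ hγ n hn).1
end

section
/- Suppose δ ≥ 0 is such that ‖w − Pw‖_a ≤ δ‖Sw‖ for every w ∈ H. Then ‖u − Pu‖ ≤ δ²‖Su‖ for every u ∈ H. (Aubin–Nitsche duality lift from the energy norm to the base norm.) -/
open scoped RealInnerProductSpace

/-- Aubin–Nitsche duality lift: if the energy-norm error of the elliptic
projection is bounded by `δ ‖S w‖` for all `w`, then the base-norm error is
bounded by `δ² ‖S u‖`. -/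
theorem stmt_6 {H : Type*} [NormedAddCommGroup H] [InnerProductSpace ℝ H] [CompleteSpace H]
    (S : H →L[ℝ] H) (hSsa : IsSelfAdjoint S)
    (c : ℝ) (hc : 0 < c) (hcoer : ∀ v : H, c * ‖v‖ ^ 2 ≤ ⟪S v, v⟫)
    (Vms : Submodule ℝ H) (hVms : IsClosed (Vms : Set H))
    (P : H → H) (hPmem : ∀ u, P u ∈ Vms)
    (hPorth : ∀ u : H, ∀ v ∈ Vms, ⟪S (u - P u), v⟫ = 0)
    (δ : ℝ) (hδ : 0 ≤ δ)
    (hEnergy : ∀ w : H, Real.sqrt ⟪S (w - P w), w - P w⟫ ≤ δ * ‖S w‖) :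
    ∀ u : H, ‖u - P u‖ ≤ δ ^ 2 * ‖S u‖ := by
  intro u
  have hsymm : ∀ x y : H, ⟪S x, y⟫ = ⟪x, S y⟫ :=
    ContinuousLinearMap.isSelfAdjoint_iff_isSymmetric.mp hSsa
  set e := u - P u with he
  set C := δ ^ 2 * ‖S u‖ with hC
  have hCnonneg : 0 ≤ C := mul_nonneg (pow_nonneg hδ 2) (norm_nonneg _)
  -- a(x,x) ≥ 0
  have hpos : ∀ x : H, 0 ≤ ⟪S x, x⟫ := fun x =>
    le_trans (mul_nonneg hc.le (pow_nonneg (norm_nonneg x) 2)) (hcoer x)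
  -- Cauchy-Schwarz for the bilinear form a(x,y) = ⟪S x, y⟫
  have hCS : ∀ x y : H, ⟪S x, y⟫ ≤ Real.sqrt ⟪S x, x⟫ * Real.sqrt ⟪S y, y⟫ := by
    intro x y
    have hq : ∀ t : ℝ, 0 ≤ ⟪S y, y⟫ * (t * t) + (2 * ⟪S x, y⟫) * t + ⟪S x, x⟫ := by
      intro t
      have h0 := hpos (x + t • y)
      have hxy : ⟪S y, x⟫ = ⟪S x, y⟫ := by
        rw [hsymm y x, real_inner_comm]
      calc (0:ℝ) ≤ ⟪S (x + t • y), x + t • y⟫ := h0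
        _ = ⟪S y, y⟫ * (t * t) + (2 * ⟪S x, y⟫) * t + ⟪S x, x⟫ := by
            simp only [map_add, map_smul, inner_add_add_self, inner_add_left,
              inner_add_right, inner_smul_left, inner_smul_right,
              ContinuousLinearMap.add_apply, ContinuousLinearMap.coe_smul',
              Pi.smul_apply, smul_eq_mul, RCLike.star_def, conj_trivial]
            rw [hxy]; ring
    have hd := discrim_le_zero hq
    rw [discrim] at hd
    have hsq : ⟪S x, y⟫ ^ 2 ≤ ⟪S x, x⟫ * ⟪S y, y⟫ := by nlinarith
    calc ⟪S x, y⟫ ≤ |⟪S x, y⟫| := le_abs_self _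
      _ = Real.sqrt (⟪S x, y⟫ ^ 2) := (Real.sqrt_sq_eq_abs _).symm
      _ ≤ Real.sqrt (⟪S x, x⟫ * ⟪S y, y⟫) := Real.sqrt_le_sqrt hsq
      _ = Real.sqrt ⟪S x, x⟫ * Real.sqrt ⟪S y, y⟫ := Real.sqrt_mul (hpos x) _
  -- Galerkin orthogonality: a(v, e) = 0 for v ∈ Vms
  have hgal : ∀ v ∈ Vms, ⟪S v, e⟫ = 0 := by
    intro v hv
    rw [hsymm v e, real_inner_comm]
    exact hPorth u v hv
  -- key bound: ⟪S w, e⟫ ≤ C * ‖S w‖ for all w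
  have hkey : ∀ w : H, ⟪S w, e⟫ ≤ C * ‖S w‖ := by
    intro w
    have h1 : ⟪S w, e⟫ = ⟪S (w - P w), e⟫ := by
      rw [map_sub, inner_sub_left, hgal (P w) (hPmem w), sub_zero]
    rw [h1]
    calc ⟪S (w - P w), e⟫
        ≤ Real.sqrt ⟪S (w - P w), w - P w⟫ * Real.sqrt ⟪S e, e⟫ := hCS _ _
      _ ≤ (δ * ‖S w‖) * (δ * ‖S u‖) := by
          apply mul_le_mul (hEnergy w) (hEnergy u) (Real.sqrt_nonneg _)
          exact mul_nonneg hδ (norm_nonneg _)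
      _ = C * ‖S w‖ := by rw [hC]; ring
  -- the set where the inequality holds is closed and contains range S
  have hclosed : IsClosed {z : H | ⟪z, e⟫ ≤ C * ‖z‖} := by
    apply isClosed_le
    · exact Continuous.inner continuous_id continuous_const
    · exact continuous_const.mul continuous_norm
  -- range of S is dense
  have hdense : (LinearMap.range (S : H →ₗ[ℝ] H)).topologicalClosure = ⊤ := by
    rw [← Submodule.orthogonal_orthogonal_eq_closure]
    have hbot : (LinearMap.range (S : H →ₗ[ℝ] H))ᗮ = ⊥ := by
      rw [Submodule.eq_bot_iff]
      intro x hx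
      have hx0 : ⟪S x, x⟫ = 0 := hx (S x) ⟨x, rfl⟩
      have hco := hcoer x
      rw [hx0] at hco
      have h2 : ‖x‖ ^ 2 ≤ 0 := by nlinarith
      have h3 : ‖x‖ ^ 2 = 0 := le_antisymm h2 (sq_nonneg _)
      exact norm_eq_zero.mp ((pow_eq_zero_iff two_ne_zero).mp h3)
    rw [hbot, Submodule.bot_orthogonal_eq_top]
  have hmem : e ∈ {z : H | ⟪z, e⟫ ≤ C * ‖z‖} := by
    have hsub : (LinearMap.range (S : H →ₗ[ℝ] H) : Set H) ⊆ {z : H | ⟪z, e⟫ ≤ C * ‖z‖} := by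
      rintro z ⟨w, rfl⟩
      exact hkey w
    have : closure (LinearMap.range (S : H →ₗ[ℝ] H) : Set H) = Set.univ := by
      have := congrArg (fun K : Submodule ℝ H => (K : Set H)) hdense
      simpa [Submodule.topologicalClosure_coe] using this
    have he' : e ∈ closure (LinearMap.range (S : H →ₗ[ℝ] H) : Set H) := by
      rw [this]; trivial
    exact closure_minimal hsub hclosed he'
  have hfin : ⟪e, e⟫ ≤ C * ‖e‖ := hmem
  rw [real_inner_self_eq_norm_sq] at hfin
  rcases eq_or_lt_of_le (norm_nonneg e) with h0 | h0
  · rw [← h0]; exact hCnonneg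
  · nlinarith
end

section
/- If u : [0,T] → V is continuously differentiable and satisfies u'(t) + A u(t) = f(t) for all t ∈ [0,T], then ∫_0^T ‖u'(t)‖² dt ≤ ⟨A u(0), u(0)⟩ + ∫_0^T ‖f(t)‖² dt. (Energy regularity estimate for the semidiscrete parabolic problem.) -/
open scoped RealInnerProductSpace

/-- Energy regularity estimate for the parabolic problem:
`∫₀ᵀ ‖u'‖² ≤ ⟨A u(0), u(0)⟩ + ∫₀ᵀ ‖f‖²`. -/
theorem stmt_12 {V : Type*} [NormedAddCommGroup V] [InnerProductSpace ℝ V]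
    [FiniteDimensional ℝ V]
    (A : V →ₗ[ℝ] V)
    (hAsa : ∀ x y : V, ⟪A x, y⟫ = ⟪x, A y⟫) (hApsd : ∀ x : V, 0 ≤ ⟪A x, x⟫)
    (T : ℝ) (hT : 0 < T)
    (f : ℝ → V) (hf : ContinuousOn f (Set.Icc 0 T))
    (u u' : ℝ → V)
    (hderiv : ∀ t ∈ Set.Icc (0 : ℝ) T, HasDerivAt u (u' t) t)
    (hderivcont : ContinuousOn u' (Set.Icc (0 : ℝ) T))
    (heq : ∀ t ∈ Set.Icc (0 : ℝ) T, u' t + A (u t) = f t) :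
    ∫ t in (0 : ℝ)..T, ‖u' t‖ ^ 2 ≤ ⟪A (u 0), u 0⟫ + ∫ t in (0 : ℝ)..T, ‖f t‖ ^ 2 := by
  have hT' : (0 : ℝ) ≤ T := hT.le
  have huIcc : Set.uIcc (0 : ℝ) T = Set.Icc 0 T := Set.uIcc_of_le hT'
  set B := LinearMap.toContinuousLinearMap A with hBdef
  have hBapp : ∀ x, B x = A x := fun x => rfl
  have hu_cont : ContinuousOn u (Set.Icc 0 T) := fun t ht =>
    ((hderiv t ht).continuousAt).continuousWithinAt
  have hAu_cont : ContinuousOn (fun t => A (u t)) (Set.Icc 0 T) := by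
    have : Continuous B := B.continuous
    exact this.comp_continuousOn hu_cont
  -- derivative of the energy E t = ⟪A (u t), u t⟫
  have hE : ∀ t ∈ Set.Icc (0 : ℝ) T,
      HasDerivAt (fun s => ⟪A (u s), u s⟫) (2 * ⟪A (u t), u' t⟫) t := by
    intro t ht
    have h1 : HasDerivAt (fun s => A (u s)) (A (u' t)) t :=
      (B.hasFDerivAt.comp_hasDerivAt t (hderiv t ht))
    have h2 := (h1.inner ℝ (hderiv t ht))
    have heqd : ⟪A (u t), u' t⟫ + ⟪A (u' t), u t⟫ = 2 * ⟪A (u t), u' t⟫ := by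
      rw [hAsa (u' t) (u t), real_inner_comm]; ring
    simpa [heqd] using h2
  -- integrability
  have hi1 : IntervalIntegrable (fun t => ‖u' t‖ ^ 2) MeasureTheory.volume 0 T := by
    apply ContinuousOn.intervalIntegrable
    rw [huIcc]
    exact (hderivcont.norm).pow 2
  have hi2 : IntervalIntegrable (fun t => ‖f t‖ ^ 2) MeasureTheory.volume 0 T := by
    apply ContinuousOn.intervalIntegrable
    rw [huIcc]
    exact (hf.norm).pow 2
  have hi3 : IntervalIntegrable (fun t => 2 * ⟪A (u t), u' t⟫) MeasureTheory.volume 0 T := by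
    apply ContinuousOn.intervalIntegrable
    rw [huIcc]
    exact continuousOn_const.mul (hAu_cont.inner hderivcont)
  -- fundamental theorem of calculus for E
  have hFTC : ∫ t in (0 : ℝ)..T, 2 * ⟪A (u t), u' t⟫ =
      ⟪A (u T), u T⟫ - ⟪A (u 0), u 0⟫ := by
    apply intervalIntegral.integral_eq_sub_of_hasDerivAt
    · intro t ht; rw [huIcc] at ht; exact hE t ht
    · exact hi3
  -- pointwise bound
  have key : ∀ t ∈ Set.Icc (0 : ℝ) T,
      ‖u' t‖ ^ 2 + 2 * ⟪A (u t), u' t⟫ ≤ ‖f t‖ ^ 2 := by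
    intro t ht
    have hft : f t = u' t + A (u t) := (heq t ht).symm
    have hexp : ‖f t‖ ^ 2 = ‖u' t‖ ^ 2 + 2 * ⟪u' t, A (u t)⟫ + ‖A (u t)‖ ^ 2 := by
      rw [hft, @norm_add_sq_real]
    rw [hexp, real_inner_comm (u' t) (A (u t))]
    nlinarith [sq_nonneg ‖A (u t)‖]
  -- integrate the pointwise bound
  have hsum : IntervalIntegrable (fun t => ‖u' t‖ ^ 2 + 2 * ⟪A (u t), u' t⟫)
      MeasureTheory.volume 0 T := hi1.add hi3
  have hint : ∫ t in (0 : ℝ)..T, (‖u' t‖ ^ 2 + 2 * ⟪A (u t), u' t⟫) ≤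
      ∫ t in (0 : ℝ)..T, ‖f t‖ ^ 2 :=
    intervalIntegral.integral_mono_on hT' hsum hi2 key
  rw [intervalIntegral.integral_add hi1 hi3, hFTC] at hint
  have hET := hApsd (u T)
  linarith
end

section
/- There exists an absolute constant C (independent of V, A, V_ms, δ, f, T, and the initial data) such that the following holds. Assume δ ≥ 0 satisfies ‖w − Pw‖ ≤ δ²‖Aw‖ for all w ∈ V. Let u : [0,T] → V be twice continuously differentiable with u'(t) + A u(t) = f(t) and u(0) = u_0, and let u_ms : [0,T] → V_ms be continuously differentiable with ⟨u_ms'(t) + A u_ms(t) − f(t), v⟩ = 0 for all v ∈ V_ms and all t. Then ‖(u − u_ms)(T)‖ ≤ ‖u(0) − u_ms(0)‖ + C δ² ( max_{0 ≤ t ≤ T} ‖f(t) − u'(t)‖ + ∫_0^T ‖f'(t) − u''(t)‖ dt ). (L²-norm a priori error estimate for the Galerkin semidiscretization.) -/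
/-!
Split the error as `u - u_ms = ρ + θ` with `ρ = u - P u` and `θ = P u - u_ms ∈ V_ms`. Since
`A u = f - u'`, the hypothesis on `P` bounds `‖ρ‖` by `δ² ‖f - u'‖`. Testing the Galerkin equation
with `θ` and using the `a`-orthogonality of `P` gives `⟪θ', θ⟫ + a(θ, θ) = -⟪ρ', θ⟫`, hence
`d/dt ‖θ‖ ≤ ‖ρ'‖ ≤ δ² ‖f' - u''‖` (differentiating the equation gives `A u' = f' - u''`).
Integrating this in time (through `√(‖θ‖² + ε)`, as `‖θ‖` need not be differentiable) and
bounding `ρ` at both ends gives the estimate with `C = 2`.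
-/

open scoped RealInnerProductSpace

open Set MeasureTheory

section Energy

variable {E : Type*} [NormedAddCommGroup E] [InnerProductSpace ℝ E]
  {θ θ' : ℝ → E} {g : ℝ → ℝ} {a b : ℝ}

theorem sqrt_norm_sq_add_sub_le_integral (hab : a ≤ b) {ε : ℝ} (hε : 0 < ε)
    (hθc : ContinuousOn θ (Icc a b)) (hθ : ∀ t ∈ Ioo a b, HasDerivAt θ (θ' t) t)
    (hg : IntegrableOn g (Icc a b)) (hg0 : ∀ t ∈ Ioo a b, 0 ≤ g t)
    (hθg : ∀ t ∈ Ioo a b, ⟪θ' t, θ t⟫ ≤ g t * ‖θ t‖) :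
    √(‖θ b‖ ^ 2 + ε) - √(‖θ a‖ ^ 2 + ε) ≤ ∫ t in a..b, g t := by
  have hpos : ∀ t, 0 < ‖θ t‖ ^ 2 + ε := fun t => by positivity
  refine intervalIntegral.sub_le_integral_of_hasDeriv_right_of_le hab
    ((hθc.norm.pow 2).add continuousOn_const).sqrt
    (fun t ht => ((((hθ t ht).norm_sq).add_const ε).sqrt (hpos t).ne').hasDerivWithinAt) hg
    (fun t ht => ?_)
  have hnorm : ‖θ t‖ ≤ √(‖θ t‖ ^ 2 + ε) :=
    Real.le_sqrt_of_sq_le (le_add_of_nonneg_right hε.le)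
  rw [div_le_iff₀ (by positivity), real_inner_comm]
  nlinarith [hθg t ht, mul_le_mul_of_nonneg_left hnorm (hg0 t ht)]

theorem norm_le_norm_add_integral_of_inner_deriv_le (hab : a ≤ b)
    (hθc : ContinuousOn θ (Icc a b)) (hθ : ∀ t ∈ Ioo a b, HasDerivAt θ (θ' t) t)
    (hg : IntegrableOn g (Icc a b)) (hg0 : ∀ t ∈ Ioo a b, 0 ≤ g t)
    (hθg : ∀ t ∈ Ioo a b, ⟪θ' t, θ t⟫ ≤ g t * ‖θ t‖) :
    ‖θ b‖ ≤ ‖θ a‖ + ∫ t in a..b, g t := by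
  refine le_of_forall_pos_le_add fun ε hε => ?_
  have hreg := sqrt_norm_sq_add_sub_le_integral hab (pow_pos hε 2) hθc hθ hg hg0 hθg
  have hb : ‖θ b‖ ≤ √(‖θ b‖ ^ 2 + ε ^ 2) :=
    Real.le_sqrt_of_sq_le (le_add_of_nonneg_right (by positivity))
  have ha : √(‖θ a‖ ^ 2 + ε ^ 2) ≤ ‖θ a‖ + ε :=
    Real.sqrt_le_iff.mpr ⟨by positivity, by nlinarith [norm_nonneg (θ a)]⟩
  linarith

end Energy

theorem isLinearMap_of_mem_of_sub_mem {R M : Type*} [Ring R] [AddCommGroup M] [Module R M]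
    {K L : Submodule R M} (hKL : Disjoint K L) {P : M → M} (hPK : ∀ w, P w ∈ K)
    (hPL : ∀ w, w - P w ∈ L) : IsLinearMap R P := by
  rw [Submodule.disjoint_def] at hKL
  constructor
  · intro x y
    refine sub_eq_zero.mp (hKL _ (K.sub_mem (hPK _) (K.add_mem (hPK x) (hPK y))) ?_)
    convert L.sub_mem (L.add_mem (hPL x) (hPL y)) (hPL (x + y)) using 1
    abel
  · intro c x
    refine sub_eq_zero.mp (hKL _ (K.sub_mem (hPK _) (K.smul_mem c (hPK x))) ?_)
    convert L.sub_mem (L.smul_mem c (hPL x)) (hPL (c • x)) using 1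
    rw [smul_sub]; abel

section Galerkin

variable {V : Type*} [NormedAddCommGroup V] [InnerProductSpace ℝ V]
  {A : V →ₗ[ℝ] V} {Vms : Submodule ℝ V} {P : V → V}

theorem disjoint_comap_orthogonal (hA_pos : ∀ x : V, x ≠ 0 → 0 < ⟪A x, x⟫) :
    Disjoint Vms (Vmsᗮ.comap A) := by
  refine Submodule.disjoint_def.mpr fun x hx hxA => ?_
  by_contra hx0
  have hAx : ⟪x, A x⟫ = 0 := (Submodule.mem_orthogonal _ _).mp hxA x hx
  exact (hA_pos x hx0).ne' (real_inner_comm (A x) x ▸ hAx)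

theorem isLinearMap_of_inner_map_sub_eq_zero (hA_pos : ∀ x : V, x ≠ 0 → 0 < ⟪A x, x⟫)
    (hPmem : ∀ w, P w ∈ Vms) (hPorth : ∀ w, ∀ v ∈ Vms, ⟪A (w - P w), v⟫ = 0) :
    IsLinearMap ℝ P :=
  isLinearMap_of_mem_of_sub_mem (disjoint_comap_orthogonal hA_pos) hPmem fun w =>
    (Submodule.mem_orthogonal _ _).mpr fun v hv => real_inner_comm (A (w - P w)) v ▸ hPorth w v hv

theorem inner_galerkin_error_le (hA_nonneg : ∀ x : V, 0 ≤ ⟪A x, x⟫)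
    (hPmem : ∀ w, P w ∈ Vms) (hPorth : ∀ w, ∀ v ∈ Vms, ⟪A (w - P w), v⟫ = 0)
    {x x' y y' : V} (hy : y ∈ Vms) (hgal : ⟪y' + A y - (x' + A x), P x - y⟫ = 0) :
    ⟪P x' - y', P x - y⟫ ≤ ‖x' - P x'‖ * ‖P x - y‖ := by
  set e := P x - y
  have hρ : ⟪A (x - P x), e⟫ = 0 := hPorth x e (Vms.sub_mem (hPmem x) hy)
  have hrepr : ⟪P x' - y', e⟫ = -⟪x' - P x', e⟫ - ⟪A e, e⟫ := by
    simp only [e, map_sub, inner_sub_left, inner_add_left] at hgal hρ ⊢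
    linarith
  have hCS : -⟪x' - P x', e⟫ ≤ ‖x' - P x'‖ * ‖e‖ :=
    (neg_le_abs _).trans (abs_real_inner_le_norm _ _)
  linarith [hA_nonneg e]


variable [FiniteDimensional ℝ V]

theorem add_map_deriv_eq_of_forall_mem {s : Set ℝ} {t : ℝ} {u u' f : ℝ → V} {u'' f' : V}
    (hs : s ∈ nhds t) (hu : HasDerivAt u (u' t) t) (hu' : HasDerivAt u' u'' t)
    (hf : HasDerivAt f f' t) (heq : ∀ τ ∈ s, u' τ + A (u τ) = f τ) :
    u'' + A (u' t) = f' :=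
  have hAu : HasDerivAt (fun τ => A (u τ)) (A (u' t)) t :=
    A.toContinuousLinearMap.hasFDerivAt.comp_hasDerivAt t hu
  ((hu'.add hAu).congr_of_eventuallyEq (Filter.eventually_of_mem hs fun τ hτ => (heq τ hτ).symm)).unique hf

theorem norm_proj_sub_galerkin_le (hA_pos : ∀ x : V, x ≠ 0 → 0 < ⟪A x, x⟫)
    (hPmem : ∀ w, P w ∈ Vms) (hPorth : ∀ w, ∀ v ∈ Vms, ⟪A (w - P w), v⟫ = 0)
    {δ : ℝ} (hP : ∀ w, ‖w - P w‖ ≤ δ ^ 2 * ‖A w‖) {T : ℝ} (hT : 0 ≤ T)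
    {f f' u u' u'' ums ums' : ℝ → V}
    (hf : ∀ t ∈ Icc 0 T, HasDerivAt f (f' t) t) (hf'c : ContinuousOn f' (Icc 0 T))
    (hu : ∀ t ∈ Icc 0 T, HasDerivAt u (u' t) t) (hu' : ∀ t ∈ Icc 0 T, HasDerivAt u' (u'' t) t)
    (hu''c : ContinuousOn u'' (Icc 0 T)) (hPDE : ∀ t ∈ Icc 0 T, u' t + A (u t) = f t)
    (hums_mem : ∀ t, ums t ∈ Vms) (hums : ∀ t ∈ Icc 0 T, HasDerivAt ums (ums' t) t)
    (hGal : ∀ t ∈ Icc 0 T, ∀ v ∈ Vms, ⟪ums' t + A (ums t) - f t, v⟫ = 0) :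
    ‖P (u T) - ums T‖ ≤ ‖P (u 0) - ums 0‖ + δ ^ 2 * ∫ t in (0 : ℝ)..T, ‖f' t - u'' t‖ := by
  let Pc : V →L[ℝ] V :=
    LinearMap.toContinuousLinearMap (isLinearMap_of_inner_map_sub_eq_zero hA_pos hPmem hPorth).mk'
  have hθ (t) (ht : t ∈ Icc 0 T) :
      HasDerivAt (fun s => P (u s) - ums s) (P (u' t) - ums' t) t :=
    (Pc.hasFDerivAt.comp_hasDerivAt t (hu t ht)).sub (hums t ht)
  have hA_nonneg (x : V) : 0 ≤ ⟪A x, x⟫ := by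
    rcases eq_or_ne x 0 with rfl | hx
    · simp
    · exact (hA_pos x hx).le
  have hρ' (t) (ht : t ∈ Ioo 0 T) : ‖u' t - P (u' t)‖ ≤ δ ^ 2 * ‖f' t - u'' t‖ := by
    have hAu' : A (u' t) = f' t - u'' t := eq_sub_of_add_eq' <| add_map_deriv_eq_of_forall_mem
      (Icc_mem_nhds ht.1 ht.2) (hu t (Ioo_subset_Icc_self ht)) (hu' t (Ioo_subset_Icc_self ht))
      (hf t (Ioo_subset_Icc_self ht)) hPDE
    exact hAu' ▸ hP (u' t)
  have hkey (t) (ht : t ∈ Ioo 0 T) :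
      ⟪P (u' t) - ums' t, P (u t) - ums t⟫ ≤ δ ^ 2 * ‖f' t - u'' t‖ * ‖P (u t) - ums t‖ := by
    have htI := Ioo_subset_Icc_self ht
    have hgal := hGal t htI _ (Vms.sub_mem (hPmem (u t)) (hums_mem t))
    rw [← hPDE t htI] at hgal
    exact (inner_galerkin_error_le hA_nonneg hPmem hPorth (hums_mem t) hgal).trans
      (mul_le_mul_of_nonneg_right (hρ' t ht) (norm_nonneg _))
  rw [← intervalIntegral.integral_const_mul]
  exact norm_le_norm_add_integral_of_inner_deriv_le hT (HasDerivAt.continuousOn hθ)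
    (fun t ht => hθ t (Ioo_subset_Icc_self ht))
    (continuousOn_const.mul (hf'c.sub hu''c).norm).integrableOn_Icc
    (fun t _ => by positivity) hkey

end Galerkin

/-- L²-norm a priori error estimate for the Galerkin semidiscretization of the
parabolic problem: there is an absolute constant `C` such that
`‖(u−u_ms)(T)‖ ≤ ‖u(0)−u_ms(0)‖ + Cδ²(max_{[0,T]} ‖f−u'‖ + ∫₀ᵀ ‖f'−u''‖)`. -/
theorem stmt_14 : ∃ C : ℝ, 0 ≤ C ∧
    ∀ (V : Type*) [NormedAddCommGroup V] [InnerProductSpace ℝ V] [FiniteDimensional ℝ V]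
      (A : V →ₗ[ℝ] V),
      (∀ x y : V, ⟪A x, y⟫ = ⟪x, A y⟫) →
      (∀ x : V, x ≠ 0 → 0 < ⟪A x, x⟫) →
      ∀ (Vms : Submodule ℝ V) (P : V → V),
      (∀ w : V, P w ∈ Vms) →
      (∀ w : V, ∀ v ∈ Vms, ⟪A (w - P w), v⟫ = 0) →
      ∀ δ : ℝ, 0 ≤ δ →
      (∀ w : V, ‖w - P w‖ ≤ δ ^ 2 * ‖A w‖) →
      ∀ T : ℝ, 0 < T →
      ∀ f f' : ℝ → V,
      (∀ t ∈ Set.Icc (0 : ℝ) T, HasDerivAt f (f' t) t) →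
      ContinuousOn f' (Set.Icc (0 : ℝ) T) →
      ∀ (u0 : V) (u u' u'' : ℝ → V),
      (∀ t ∈ Set.Icc (0 : ℝ) T, HasDerivAt u (u' t) t) →
      (∀ t ∈ Set.Icc (0 : ℝ) T, HasDerivAt u' (u'' t) t) →
      ContinuousOn u'' (Set.Icc (0 : ℝ) T) →
      (∀ t ∈ Set.Icc (0 : ℝ) T, u' t + A (u t) = f t) →
      u 0 = u0 →
      ∀ ums ums' : ℝ → V,
      (∀ t : ℝ, ums t ∈ Vms) →
      (∀ t ∈ Set.Icc (0 : ℝ) T, HasDerivAt ums (ums' t) t) →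
      ContinuousOn ums' (Set.Icc (0 : ℝ) T) →
      (∀ t ∈ Set.Icc (0 : ℝ) T, ∀ v ∈ Vms, ⟪ums' t + A (ums t) - f t, v⟫ = 0) →
      ‖u T - ums T‖ ≤ ‖u 0 - ums 0‖ + C * δ ^ 2 *
        (sSup ((fun t => ‖f t - u' t‖) '' Set.Icc (0 : ℝ) T) +
          ∫ t in (0 : ℝ)..T, ‖f' t - u'' t‖) := by
  refine ⟨2, zero_le_two, ?_⟩
  intro V _ _ _ A _ hA_pos Vms P hPmem hPorth δ _ hP T hT f f' hf hf'c _ u u' u'' hu hu' hu''c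
    hPDE _ ums ums' hums_mem hums _ hGal
  set M := sSup ((fun t => ‖f t - u' t‖) '' Icc (0 : ℝ) T)
  have hbdd : BddAbove ((fun t => ‖f t - u' t‖) '' Icc (0 : ℝ) T) :=
    isCompact_Icc.bddAbove_image ((HasDerivAt.continuousOn hf).sub (HasDerivAt.continuousOn hu')).norm
  have hρ (t) (ht : t ∈ Icc 0 T) : ‖u t - P (u t)‖ ≤ δ ^ 2 * M :=
    calc ‖u t - P (u t)‖ ≤ δ ^ 2 * ‖f t - u' t‖ := eq_sub_of_add_eq' (hPDE t ht) ▸ hP (u t)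
      _ ≤ δ ^ 2 * M := by gcongr; exact le_csSup hbdd (mem_image_of_mem _ ht)
  have hθ := norm_proj_sub_galerkin_le hA_pos hPmem hPorth hP hT.le hf hf'c hu hu' hu''c hPDE
    hums_mem hums hGal
  have hI : 0 ≤ δ ^ 2 * ∫ t in (0 : ℝ)..T, ‖f' t - u'' t‖ :=
    mul_nonneg (sq_nonneg δ) (intervalIntegral.integral_nonneg hT.le fun t _ => norm_nonneg _)
  have hρ0 := hρ 0 (left_mem_Icc.mpr hT.le)
  have hρT := hρ T (right_mem_Icc.mpr hT.le)
  have h0 := norm_sub_le_norm_sub_add_norm_sub (P (u 0)) (u 0) (ums 0)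
  have hT' := norm_sub_le_norm_sub_add_norm_sub (u T) (P (u T)) (ums T)
  rw [norm_sub_rev (P (u 0)) (u 0)] at h0
  linarith
end
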